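/- Let U ⊆ ℂ be open and Ω : U → ℝ_{>0} smooth. Define the 2×2 complex-matrix-valued 1-form A on U by A = [[ (1/4)(∂̄ − ∂) ln Ω , −(1/2) Ω^{1/2} dz̄ ], [ (1/2) Ω^{1/2} dz , (1/4)(∂ − ∂̄) ln Ω ]], where ∂f = (∂f/∂z) dz and ∂̄f = (∂f/∂z̄) dz̄. Then its curvature F = dA + A ∧ A is the diagonal matrix-valued 2-form F = [[ (i/2)ρ − (i/2)ω_C , 0 ], [ 0 , −(i/2)ρ + (i/2)ω_C ]], where ω_C = (i/2) Ω dz ∧ dz̄ and ρ = −i ∂∂̄ ln Ω = K ω_C with K = −(2/Ω) ∂_z ∂_{z̄} ln Ω the Gauss curvature of the metric Ω dz dz̄. Equivalently, F = (1/2)(1 − K) ω_C ⊗ Φ where Φ = diag(−i, i). -/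

import Mathlib

open ComplexConjugate
set_option maxHeartbeats 2000000

/-- The Wirtinger derivative `∂f/∂z = ½(∂_x − i∂_y)f`. -/
noncomputable def wirtingerD (f : ℂ → ℂ) (z : ℂ) : ℂ :=
  (1 / 2) * (fderiv ℝ f z 1 - Complex.I * fderiv ℝ f z Complex.I)

/-- The Wirtinger derivative `∂f/∂z̄ = ½(∂_x + i∂_y)f`. -/
noncomputable def wirtingerDBar (f : ℂ → ℂ) (z : ℂ) : ℂ :=
  (1 / 2) * (fderiv ℝ f z 1 + Complex.I * fderiv ℝ f z Complex.I)

/-- Exterior derivative of a complex-valued 1-form on an open set of `ℂ`. -/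
noncomputable def extDeriv1 (α : ℂ → ℂ → ℂ) (z v₀ v₁ : ℂ) : ℂ :=
  fderiv ℝ (fun w => α w v₁) z v₀ - fderiv ℝ (fun w => α w v₀) z v₁

/-- Wedge product of two complex-valued 1-forms on `ℂ`. -/
def wedge11 (α β : ℂ → ℂ → ℂ) (z v₀ v₁ : ℂ) : ℂ :=
  α z v₀ * β z v₁ - α z v₁ * β z v₀

/-- The matrix-valued connection 1-form
`A = [[ ¼(∂̄−∂)lnΩ , −½Ω^{1/2}dz̄ ], [ ½Ω^{1/2}dz , ¼(∂−∂̄)lnΩ ]]`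
of the spinorial ansatz, in the conformal trivialization (here `dz(v) = v`,
`dz̄(v) = conj v`). -/
noncomputable def spinConnection (Ω : ℂ → ℝ) : Fin 2 → Fin 2 → ℂ → ℂ → ℂ :=
  fun i j =>
    (!![fun z v => (1 / 4 : ℂ) * (wirtingerDBar (fun w => (Real.log (Ω w) : ℂ)) z * conj v
          - wirtingerD (fun w => (Real.log (Ω w) : ℂ)) z * v),
        fun z v => -(1 / 2 : ℂ) * (Real.sqrt (Ω z) : ℂ) * conj v;
        fun z v => (1 / 2 : ℂ) * (Real.sqrt (Ω z) : ℂ) * v,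
        fun z v => (1 / 4 : ℂ) * (wirtingerD (fun w => (Real.log (Ω w) : ℂ)) z * v
          - wirtingerDBar (fun w => (Real.log (Ω w) : ℂ)) z * conj v)] :
      Matrix (Fin 2) (Fin 2) (ℂ → ℂ → ℂ)) i j

/-- The curvature `F = dA + A ∧ A` of the matrix-valued connection 1-form `A`. -/
noncomputable def spinCurvature (Ω : ℂ → ℝ) (i j : Fin 2) (z v₀ v₁ : ℂ) : ℂ :=
  extDeriv1 (spinConnection Ω i j) z v₀ v₁
    + ∑ l, wedge11 (spinConnection Ω i l) (spinConnection Ω l j) z v₀ v₁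

/-- The volume form `ω_C = (i/2) Ω dz ∧ dz̄` of the metric `Ω dz dz̄`. -/
noncomputable def omegaC (Ω : ℂ → ℝ) (z v₀ v₁ : ℂ) : ℂ :=
  (Complex.I / 2) * (Ω z : ℂ) * (v₀ * conj v₁ - v₁ * conj v₀)

/-- The Ricci form `ρ = −i ∂∂̄ ln Ω`. -/
noncomputable def ricciForm (Ω : ℂ → ℝ) (z v₀ v₁ : ℂ) : ℂ :=
  -Complex.I * wirtingerD (fun w => wirtingerDBar (fun u => (Real.log (Ω u) : ℂ)) w) z *
    (v₀ * conj v₁ - v₁ * conj v₀)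

/-- The Gauss curvature `K = −(2/Ω) ∂_z∂_z̄ ln Ω` of the metric `Ω dz dz̄`. -/
noncomputable def gaussK (Ω : ℂ → ℝ) (z : ℂ) : ℂ :=
  -(2 / (Ω z : ℂ)) * wirtingerD (fun w => wirtingerDBar (fun u => (Real.log (Ω u) : ℂ)) w) z

private lemma clm_decomp (L : ℂ →L[ℝ] ℂ) (v : ℂ) :
    L v = (1 / 2 : ℂ) * (L 1 - Complex.I * L Complex.I) * v
      + (1 / 2 : ℂ) * (L 1 + Complex.I * L Complex.I) * conj v := by
  obtain ⟨x, y⟩ := v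
  have hv : (Complex.mk x y) = (x : ℂ) + (y : ℂ) * Complex.I := Complex.mk_eq_add_mul_I x y
  have h1 : L ((x : ℂ) + (y : ℂ) * Complex.I) = (x : ℂ) * L 1 + (y : ℂ) * L Complex.I := by
    calc L ((x : ℂ) + (y : ℂ) * Complex.I)
        = L ((x : ℝ) • (1 : ℂ) + (y : ℝ) • Complex.I) := by
          rw [Complex.real_smul, Complex.real_smul, mul_one]
      _ = (x : ℝ) • L 1 + (y : ℝ) • L Complex.I := by rw [map_add, map_smul, map_smul]
      _ = (x : ℂ) * L 1 + (y : ℂ) * L Complex.I := by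
          rw [Complex.real_smul, Complex.real_smul]
  have hconj : conj ((x : ℂ) + (y : ℂ) * Complex.I) = (x : ℂ) - (y : ℂ) * Complex.I := by
    simp [Complex.conj_ofReal]
    ring
  rw [hv, h1, hconj]
  linear_combination ((y : ℂ) * L Complex.I) * Complex.I_mul_I

/-- The curvature of the spinorial connection is
`F = [[ (i/2)ρ − (i/2)ω_C , 0 ], [ 0 , −(i/2)ρ + (i/2)ω_C ]]`,
equivalently `F = ½(1 − K) ω_C ⊗ Φ` with `Φ = diag(−i, i)`; moreover `ρ = K ω_C`. -/
theorem spinCurvature_eq (U : Set ℂ) (hU : IsOpen U) (Ω : ℂ → ℝ)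
    (hΩ : ContDiffOn ℝ (⊤ : ℕ∞) Ω U) (hΩpos : ∀ z ∈ U, 0 < Ω z) :
    ∀ z ∈ U, ∀ v₀ v₁ : ℂ,
      (spinCurvature Ω 0 0 z v₀ v₁
        = (Complex.I / 2) * ricciForm Ω z v₀ v₁ - (Complex.I / 2) * omegaC Ω z v₀ v₁) ∧
      spinCurvature Ω 0 1 z v₀ v₁ = 0 ∧
      spinCurvature Ω 1 0 z v₀ v₁ = 0 ∧
      (spinCurvature Ω 1 1 z v₀ v₁
        = -((Complex.I / 2) * ricciForm Ω z v₀ v₁) + (Complex.I / 2) * omegaC Ω z v₀ v₁) ∧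
      ricciForm Ω z v₀ v₁ = gaussK Ω z * omegaC Ω z v₀ v₁ ∧
      (∀ i j : Fin 2, spinCurvature Ω i j z v₀ v₁
        = (1 / 2) * (1 - gaussK Ω z) * omegaC Ω z v₀ v₁ *
            (!![-Complex.I, 0; 0, Complex.I] : Matrix (Fin 2) (Fin 2) ℂ) i j) := by
  intro z hz v₀ v₁
  have hpos := hΩpos z hz
  have hΩne : ((Ω z : ℝ) : ℂ) ≠ 0 := by exact_mod_cast hpos.ne'
  set F : ℂ → ℂ := fun w => (Real.log (Ω w) : ℂ) with hFdef
  have hFz : ContDiffAt ℝ 2 F z := by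
    have h1 : ContDiffAt ℝ 2 Ω z := (hΩ.contDiffAt (hU.mem_nhds hz)).of_le (WithTop.coe_le_coe.mpr le_top)
    have hl : ContDiffAt ℝ 2 (fun w => Real.log (Ω w)) z :=
      (Real.contDiffAt_log.mpr hpos.ne').comp z h1
    exact Complex.ofRealCLM.contDiff.contDiffAt.comp z hl
  have hdF : HasFDerivAt F (fderiv ℝ F z) z :=
    (hFz.differentiableAt (by norm_num)).hasFDerivAt
  have hdF1 : ContDiffAt ℝ 1 (fderiv ℝ F) z := hFz.fderiv_right (by norm_num)
  have hddF : HasFDerivAt (fderiv ℝ F) (fderiv ℝ (fderiv ℝ F) z) z :=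
    (hdF1.differentiableAt (by norm_num)).hasFDerivAt
  have h2 : ∀ u : ℂ, HasFDerivAt (fun w => fderiv ℝ F w u)
      ((ContinuousLinearMap.apply ℝ ℂ u).comp (fderiv ℝ (fderiv ℝ F) z)) z :=
    fun u => (ContinuousLinearMap.apply ℝ ℂ u).hasFDerivAt.comp z hddF
  have hsym : fderiv ℝ (fderiv ℝ F) z Complex.I 1 = fderiv ℝ (fderiv ℝ F) z 1 Complex.I :=
    (hFz.isSymmSndFDerivAt (by simp)) Complex.I 1
  have hc : ∀ u v : ℂ, fderiv ℝ (fderiv ℝ F) z v u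
      = (1 / 2 : ℂ) * (fderiv ℝ (fderiv ℝ F) z 1 u
          - Complex.I * fderiv ℝ (fderiv ℝ F) z Complex.I u) * v
        + (1 / 2 : ℂ) * (fderiv ℝ (fderiv ℝ F) z 1 u
          + Complex.I * fderiv ℝ (fderiv ℝ F) z Complex.I u) * conj v := by
    intro u v
    simpa using clm_decomp ((ContinuousLinearMap.apply ℝ ℂ u).comp (fderiv ℝ (fderiv ℝ F) z)) v
  have hDFv : ∀ v : ℂ, fderiv ℝ F z v
      = (1 / 2 : ℂ) * (fderiv ℝ F z 1 - Complex.I * fderiv ℝ F z Complex.I) * v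
        + (1 / 2 : ℂ) * (fderiv ℝ F z 1 + Complex.I * fderiv ℝ F z Complex.I) * conj v :=
    fun v => clm_decomp (fderiv ℝ F z) v
  -- square root facts
  have hSev : (fun w => ((Real.sqrt (Ω w) : ℝ) : ℂ))
      =ᶠ[nhds z] (fun w => Complex.exp ((1 / 2 : ℂ) * F w)) := by
    filter_upwards [hU.mem_nhds hz] with w hw
    have h1 : Real.sqrt (Ω w) = Real.exp (Real.log (Ω w) / 2) := by
      rw [Real.sqrt_eq_rpow, Real.rpow_def_of_pos (hΩpos w hw)]
      ring_nf
    simp only [hFdef, h1, Complex.ofReal_exp, Complex.ofReal_div]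
    norm_num
    ring_nf
  have hS : HasFDerivAt (fun w => ((Real.sqrt (Ω w) : ℝ) : ℂ))
      (Complex.exp ((1 / 2 : ℂ) * F z) • ((1 / 2 : ℂ) • fderiv ℝ F z)) z :=
    ((hdF.const_mul ((1 / 2 : ℂ))).cexp).congr_of_eventuallyEq hSev
  have hexpz : Complex.exp ((1 / 2 : ℂ) * F z) = ((Real.sqrt (Ω z) : ℝ) : ℂ) :=
    (hSev.eq_of_nhds).symm
  have hs2 : ((Real.sqrt (Ω z) : ℝ) : ℂ) * ((Real.sqrt (Ω z) : ℝ) : ℂ) = ((Ω z : ℝ) : ℂ) := by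
    rw [← Complex.ofReal_mul, Real.mul_self_sqrt hpos.le]
  -- derivatives of the connection coefficient functions
  have haF : HasFDerivAt
      (fun w => (1 / 2 : ℂ) * (fderiv ℝ F w 1 - Complex.I * fderiv ℝ F w Complex.I))
      ((1 / 2 : ℂ) • ((ContinuousLinearMap.apply ℝ ℂ 1).comp (fderiv ℝ (fderiv ℝ F) z)
        - Complex.I • (ContinuousLinearMap.apply ℝ ℂ Complex.I).comp (fderiv ℝ (fderiv ℝ F) z))) z :=
    ((h2 1).sub ((h2 Complex.I).const_mul Complex.I)).const_mul ((1 / 2 : ℂ))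
  have hbF : HasFDerivAt
      (fun w => (1 / 2 : ℂ) * (fderiv ℝ F w 1 + Complex.I * fderiv ℝ F w Complex.I))
      ((1 / 2 : ℂ) • ((ContinuousLinearMap.apply ℝ ℂ 1).comp (fderiv ℝ (fderiv ℝ F) z)
        + Complex.I • (ContinuousLinearMap.apply ℝ ℂ Complex.I).comp (fderiv ℝ (fderiv ℝ F) z))) z :=
    ((h2 1).add ((h2 Complex.I).const_mul Complex.I)).const_mul ((1 / 2 : ℂ))
  have h00 : ∀ v : ℂ, HasFDerivAt
      (fun w => (1 / 4 : ℂ) * ((1 / 2 : ℂ) * (fderiv ℝ F w 1 + Complex.I * fderiv ℝ F w Complex.I) * conj v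
        - (1 / 2 : ℂ) * (fderiv ℝ F w 1 - Complex.I * fderiv ℝ F w Complex.I) * v))
      ((1 / 4 : ℂ) • ((conj v) • ((1 / 2 : ℂ) • ((ContinuousLinearMap.apply ℝ ℂ 1).comp (fderiv ℝ (fderiv ℝ F) z)
          + Complex.I • (ContinuousLinearMap.apply ℝ ℂ Complex.I).comp (fderiv ℝ (fderiv ℝ F) z)))
        - v • ((1 / 2 : ℂ) • ((ContinuousLinearMap.apply ℝ ℂ 1).comp (fderiv ℝ (fderiv ℝ F) z)
          - Complex.I • (ContinuousLinearMap.apply ℝ ℂ Complex.I).comp (fderiv ℝ (fderiv ℝ F) z))))) z :=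
    fun v => ((hbF.mul_const (conj v)).sub (haF.mul_const v)).const_mul ((1 / 4 : ℂ))
  have h11 : ∀ v : ℂ, HasFDerivAt
      (fun w => (1 / 4 : ℂ) * ((1 / 2 : ℂ) * (fderiv ℝ F w 1 - Complex.I * fderiv ℝ F w Complex.I) * v
        - (1 / 2 : ℂ) * (fderiv ℝ F w 1 + Complex.I * fderiv ℝ F w Complex.I) * conj v))
      ((1 / 4 : ℂ) • (v • ((1 / 2 : ℂ) • ((ContinuousLinearMap.apply ℝ ℂ 1).comp (fderiv ℝ (fderiv ℝ F) z)
          - Complex.I • (ContinuousLinearMap.apply ℝ ℂ Complex.I).comp (fderiv ℝ (fderiv ℝ F) z)))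
        - (conj v) • ((1 / 2 : ℂ) • ((ContinuousLinearMap.apply ℝ ℂ 1).comp (fderiv ℝ (fderiv ℝ F) z)
          + Complex.I • (ContinuousLinearMap.apply ℝ ℂ Complex.I).comp (fderiv ℝ (fderiv ℝ F) z))))) z :=
    fun v => ((haF.mul_const v).sub (hbF.mul_const (conj v))).const_mul ((1 / 4 : ℂ))
  have h01 : ∀ v : ℂ, HasFDerivAt
      (fun w => -(1 / 2 : ℂ) * ((Real.sqrt (Ω w) : ℝ) : ℂ) * conj v)
      ((conj v) • ((-(1 / 2 : ℂ)) • (Complex.exp ((1 / 2 : ℂ) * F z) • ((1 / 2 : ℂ) • fderiv ℝ F z)))) z :=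
    fun v => (hS.const_mul (-(1 / 2 : ℂ))).mul_const (conj v)
  have h10 : ∀ v : ℂ, HasFDerivAt
      (fun w => (1 / 2 : ℂ) * ((Real.sqrt (Ω w) : ℝ) : ℂ) * v)
      (v • (((1 / 2 : ℂ)) • (Complex.exp ((1 / 2 : ℂ) * F z) • ((1 / 2 : ℂ) • fderiv ℝ F z)))) z :=
    fun v => (hS.const_mul ((1 / 2 : ℂ))).mul_const v
  -- the four curvature entries
  have hE00 : spinCurvature Ω 0 0 z v₀ v₁
      = (Complex.I / 2) * ricciForm Ω z v₀ v₁ - (Complex.I / 2) * omegaC Ω z v₀ v₁ := by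
    simp only [spinCurvature, extDeriv1, wedge11, Fin.sum_univ_two, spinConnection,
      ricciForm, omegaC, Matrix.cons_val', Matrix.cons_val_zero, Matrix.cons_val_one,
      Matrix.head_cons, Matrix.empty_val', Matrix.cons_val_fin_one, Matrix.of_apply,
      Matrix.vecHead, Matrix.vecTail, wirtingerD, wirtingerDBar]
    rw [← hFdef]
    rw [(h00 v₁).fderiv, (h00 v₀).fderiv, hbF.fderiv]
    simp only [ContinuousLinearMap.smul_apply, ContinuousLinearMap.sub_apply,
      ContinuousLinearMap.add_apply, ContinuousLinearMap.coe_comp', Function.comp_apply,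
      ContinuousLinearMap.apply_apply, smul_eq_mul]
    rw [hc 1 v₀, hc Complex.I v₀, hc 1 v₁, hc Complex.I v₁, hsym, ← hs2]
    linear_combination (((1 / 4 : ℂ) * (((Real.sqrt (Ω z) : ℝ) : ℂ) * ((Real.sqrt (Ω z) : ℝ) : ℂ))
        + (1 / 8 : ℂ) * fderiv ℝ (fderiv ℝ F) z 1 1
        - (1 / 8 : ℂ) * fderiv ℝ (fderiv ℝ F) z Complex.I Complex.I * Complex.I * Complex.I)
      * (v₀ * conj v₁ - v₁ * conj v₀)) * Complex.I_mul_I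
  have hE01 : spinCurvature Ω 0 1 z v₀ v₁ = 0 := by
    simp only [spinCurvature, extDeriv1, wedge11, Fin.sum_univ_two, spinConnection,
      Matrix.cons_val', Matrix.cons_val_zero, Matrix.cons_val_one,
      Matrix.head_cons, Matrix.empty_val', Matrix.cons_val_fin_one, Matrix.of_apply,
      Matrix.vecHead, Matrix.vecTail, wirtingerD, wirtingerDBar]
    rw [← hFdef]
    rw [(h01 v₁).fderiv, (h01 v₀).fderiv]
    simp only [ContinuousLinearMap.smul_apply, smul_eq_mul]
    rw [hexpz, hDFv v₀, hDFv v₁]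
    ring
  have hE10 : spinCurvature Ω 1 0 z v₀ v₁ = 0 := by
    simp only [spinCurvature, extDeriv1, wedge11, Fin.sum_univ_two, spinConnection,
      Matrix.cons_val', Matrix.cons_val_zero, Matrix.cons_val_one,
      Matrix.head_cons, Matrix.empty_val', Matrix.cons_val_fin_one, Matrix.of_apply,
      Matrix.vecHead, Matrix.vecTail, wirtingerD, wirtingerDBar]
    rw [← hFdef]
    rw [(h10 v₁).fderiv, (h10 v₀).fderiv]
    simp only [ContinuousLinearMap.smul_apply, smul_eq_mul]
    rw [hexpz, hDFv v₀, hDFv v₁]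
    ring
  have hE11 : spinCurvature Ω 1 1 z v₀ v₁
      = -((Complex.I / 2) * ricciForm Ω z v₀ v₁) + (Complex.I / 2) * omegaC Ω z v₀ v₁ := by
    simp only [spinCurvature, extDeriv1, wedge11, Fin.sum_univ_two, spinConnection,
      ricciForm, omegaC, Matrix.cons_val', Matrix.cons_val_zero, Matrix.cons_val_one,
      Matrix.head_cons, Matrix.empty_val', Matrix.cons_val_fin_one, Matrix.of_apply,
      Matrix.vecHead, Matrix.vecTail, wirtingerD, wirtingerDBar]
    rw [← hFdef]
    rw [(h11 v₁).fderiv, (h11 v₀).fderiv, hbF.fderiv]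
    simp only [ContinuousLinearMap.smul_apply, ContinuousLinearMap.sub_apply,
      ContinuousLinearMap.add_apply, ContinuousLinearMap.coe_comp', Function.comp_apply,
      ContinuousLinearMap.apply_apply, smul_eq_mul]
    rw [hc 1 v₀, hc Complex.I v₀, hc 1 v₁, hc Complex.I v₁, hsym, ← hs2]
    linear_combination (-(((1 / 4 : ℂ) * (((Real.sqrt (Ω z) : ℝ) : ℂ) * ((Real.sqrt (Ω z) : ℝ) : ℂ))
        + (1 / 8 : ℂ) * fderiv ℝ (fderiv ℝ F) z 1 1
        - (1 / 8 : ℂ) * fderiv ℝ (fderiv ℝ F) z Complex.I Complex.I * Complex.I * Complex.I)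
      * (v₀ * conj v₁ - v₁ * conj v₀))) * Complex.I_mul_I
  have hRK : ricciForm Ω z v₀ v₁ = gaussK Ω z * omegaC Ω z v₀ v₁ := by
    simp only [ricciForm, gaussK, omegaC]
    rw [← hFdef]
    field_simp
  refine ⟨hE00, hE01, hE10, hE11, hRK, ?_⟩
  intro i j
  fin_cases i <;> fin_cases j <;>
    simp only [Matrix.cons_val', Matrix.cons_val_zero, Matrix.cons_val_one,
      Matrix.head_cons, Matrix.empty_val', Matrix.cons_val_fin_one, Matrix.of_apply,
      Matrix.vecHead, Matrix.vecTail, Fin.zero_eta, Fin.mk_one]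
  · rw [hE00, hRK]; ring
  · rw [hE01]; ring
  · rw [hE10]; ring
  · rw [hE11, hRK]; ring
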